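/- Let 0 < a1 ≤ a2 be real numbers and let q ≥ 2 be a real number. Let e_1, e_2, … be non-negative integers satisfying a1 q^n / n ≤ e_n ≤ a2 q^n / n for all n ≥ 1, and define real numbers d_0 = 1, d_1, d_2, … by the formal power series identity ∑_{n=0}^∞ d_n x^n = ∏_{n=1}^∞ (1 − x^n)^{−e_n}. Then there exist real constants A1, depending only on a1, and A2, depending only on a2, such that for all n ≥ 0: (n+1)^{A1} q^n ≤ d_n ≤ (n+1)^{A2} q^n. -/

import Mathlib

/-!
Write `F = ∏ (1 - X^i)^(-e_i)` and `d_n` for its coefficients. All factors have nonnegative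
coefficients and constant term `1`, so `d_n ≥ e_n ≥ a1 q^n / n`, which is the lower bound.
For the upper bound, the logarithmic derivative `X F' = L F` with
`L = ∑_i i e_i X^i / (1 - X^i)` gives `n d_n = ∑_{k ≥ 1} L_k d_{n-k}`, where
`L_k = ∑_{i ∣ k} i e_i ≤ a2 ∑_{i ∣ k} q^i ≤ 2 a2 q^k` because the proper divisors of `k` are at
most `k / 2`. Induction on `n` with `(A + 1) ∑_{j<n} (j+1)^A ≤ (n+1)^(A+1)` then closes for
`A = 4 a2`.
-/

open PowerSeries Finset

namespace Derivation

variable {R A : Type*} [CommSemiring R] [CommSemiring A] [Algebra R A] (D : Derivation R A A)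

theorem map_pow_eq_mul_of_map_eq_mul {a h : A} (hD : D a = h * a) (n : ℕ) :
    D (a ^ n) = (n • h) * a ^ n := by
  induction n with
  | zero => simp
  | succ n ih => rw [pow_succ, leibniz, ih, hD, smul_eq_mul, smul_eq_mul]; ring

theorem map_prod_eq_mul_of_map_eq_mul {ι : Type*} (s : Finset ι) (f h : ι → A)
    (hD : ∀ i ∈ s, D (f i) = h i * f i) : D (∏ i ∈ s, f i) = (∑ i ∈ s, h i) * ∏ i ∈ s, f i := by
  classical
  induction s using Finset.induction_on with
  | empty => simp
  | insert j s hj ih =>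
    rw [prod_insert hj, sum_insert hj, leibniz, ih fun i hi => hD i (mem_insert_of_mem hi),
      hD j (mem_insert_self j s), smul_eq_mul, smul_eq_mul]
    ring

end Derivation

section GeomSum

variable {k : Type*} [CommRing k] [LinearOrder k] [IsStrictOrderedRing k] {q : k}

theorem sum_range_pow_le_pow (hq : 2 ≤ q) (n : ℕ) : ∑ i ∈ range n, q ^ i ≤ q ^ n := by
  induction n with
  | zero => simp
  | succ n ih =>
    rw [sum_range_succ, pow_succ]
    nlinarith [pow_nonneg (zero_le_two.trans hq) n]

theorem sum_divisors_pow_le (hq : 2 ≤ q) {n : ℕ} (hn : n ≠ 0) :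
    ∑ i ∈ n.divisors, q ^ i ≤ 2 * q ^ n := by
  have hsub : n.properDivisors ⊆ range (n / 2 + 1) := fun i hi => by
    obtain ⟨c, hc, rfl⟩ := (Nat.mem_properDivisors_iff_exists hn).1 hi
    rw [mem_range, Nat.lt_succ_iff, Nat.le_div_iff_mul_le two_pos]
    exact Nat.mul_le_mul_left i hc
  calc ∑ i ∈ n.divisors, q ^ i = q ^ n + ∑ i ∈ n.properDivisors, q ^ i := by
        rw [← Nat.cons_self_properDivisors hn, sum_cons]
    _ ≤ q ^ n + q ^ (n / 2 + 1) := by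
        gcongr
        exact (sum_le_sum_of_subset_of_nonneg hsub fun i _ _ => by positivity).trans
          (sum_range_pow_le_pow hq _)
    _ ≤ 2 * q ^ n := by
        rw [two_mul]
        gcongr
        · linarith
        · omega

end GeomSum

namespace PowerSeries

section NonnegCoeffs

variable {R : Type*} [Semiring R] [PartialOrder R] [IsOrderedRing R]

def nonnegCoeffs : Subsemiring R⟦X⟧ where
  carrier := {f | ∀ n, 0 ≤ coeff n f}
  mul_mem' hf hg n := by
    rw [coeff_mul]
    exact sum_nonneg fun p _ => mul_nonneg (hf _) (hg _)
  one_mem' n := by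
    rw [coeff_one]
    split_ifs <;> simp
  add_mem' hf hg n := by
    rw [map_add]
    exact add_nonneg (hf n) (hg n)
  zero_mem' n := by simp

theorem coeff_zero_mul_add_coeff_mul_zero_le {f g : R⟦X⟧} (hf : f ∈ nonnegCoeffs)
    (hg : g ∈ nonnegCoeffs) {n : ℕ} (hn : n ≠ 0) :
    coeff 0 f * coeff n g + coeff n f * coeff 0 g ≤ coeff n (f * g) := by
  rw [coeff_mul]
  exact add_le_sum (i := (0, n)) (j := (n, 0)) (f := fun p : ℕ × ℕ => coeff p.1 f * coeff p.2 g)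
    (fun p _ => mul_nonneg (hf _) (hg _)) (by simp) (by simp) (by simp [hn])

end NonnegCoeffs

noncomputable def eulerOperator (R : Type*) [CommSemiring R] : Derivation R R⟦X⟧ R⟦X⟧ :=
  (X : R⟦X⟧) • d⁄dX R

theorem coeff_eulerOperator {R : Type*} [CommSemiring R] (f : R⟦X⟧) (n : ℕ) :
    coeff n (eulerOperator R f) = n * coeff n f := by
  rw [eulerOperator, Derivation.smul_apply, smul_eq_mul]
  cases n with
  | zero => simp
  | succ n => rw [coeff_succ_X_mul, coeff_derivative, mul_comm]; push_cast; ring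

section Field

variable {k : Type*} [Field k]

theorem coeff_inv_one_sub_X_pow {i : ℕ} (hi : i ≠ 0) (n : ℕ) :
    coeff n ((1 - X ^ i : k⟦X⟧)⁻¹) = if i ∣ n then 1 else 0 := by
  suffices (1 - X ^ i : k⟦X⟧)⁻¹ = mk fun n => if i ∣ n then 1 else 0 by rw [this, coeff_mk]
  rw [inv_eq_iff_mul_eq_one (by simp [hi])]
  ext n
  rw [mul_sub, mul_one, map_sub, coeff_mul_X_pow', coeff_mk, coeff_one]
  rcases eq_or_ne n 0 with rfl | hn
  · simp [hi]
  · rw [if_neg hn]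
    by_cases hin : i ≤ n
    · simp only [if_pos hin, coeff_mk, ← Nat.dvd_sub_iff_left hin dvd_rfl, sub_self]
    · rw [if_neg hin, if_neg fun h => hin (Nat.le_of_dvd (Nat.pos_of_ne_zero hn) h), sub_zero]

theorem coeff_zero_inv_one_sub_X_pow_pow {i : ℕ} (hi : i ≠ 0) (m : ℕ) :
    coeff 0 (((1 - X ^ i : k⟦X⟧)⁻¹) ^ m) = 1 := by
  rw [coeff_zero_eq_constantCoeff_apply, map_pow, ← coeff_zero_eq_constantCoeff_apply,
    coeff_inv_one_sub_X_pow hi, if_pos (dvd_zero i), one_pow]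

-- Apply `eulerOperator k` to `(1 - X ^ i) * G = 1`; then `X ^ i * G = G - 1`.
theorem eulerOperator_inv_one_sub_X_pow {i : ℕ} (hi : i ≠ 0) :
    eulerOperator k (1 - X ^ i : k⟦X⟧)⁻¹ = (i • ((1 - X ^ i : k⟦X⟧)⁻¹ - 1)) * (1 - X ^ i)⁻¹ := by
  set G := (1 - X ^ i : k⟦X⟧)⁻¹
  have hG : (1 - X ^ i) * G = 1 := PowerSeries.mul_inv_cancel _ (by simp [hi])
  have hX : eulerOperator k (1 - X ^ i : k⟦X⟧) = -(i • X ^ i) := by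
    ext n
    simp only [coeff_eulerOperator, map_sub, map_neg, map_nsmul, coeff_one, coeff_X_pow]
    split_ifs <;> simp_all
  have h := congrArg (eulerOperator k) hG
  rw [Derivation.leibniz, Derivation.map_one_eq_zero, hX, smul_eq_mul, smul_eq_mul] at h
  linear_combination G * h + (-eulerOperator k G - i • G) * hG

variable (e : ℕ → ℕ) (N : ℕ)

noncomputable def eulerProduct : k⟦X⟧ := ∏ i ∈ Icc 1 N, ((1 - X ^ i)⁻¹) ^ e i

noncomputable def eulerLogDeriv : k⟦X⟧ := ∑ i ∈ Icc 1 N, (e i * i) • ((1 - X ^ i : k⟦X⟧)⁻¹ - 1)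

theorem coeff_zero_eulerProduct : coeff 0 (eulerProduct (k := k) e N) = 1 := by
  rw [eulerProduct, coeff_zero_eq_constantCoeff, map_prod]
  refine prod_eq_one fun i hi => ?_
  rw [← coeff_zero_eq_constantCoeff_apply,
    coeff_zero_inv_one_sub_X_pow_pow (Nat.one_le_iff_ne_zero.1 (mem_Icc.1 hi).1)]

theorem eulerOperator_eulerProduct :
    eulerOperator k (eulerProduct e N) = eulerLogDeriv e N * eulerProduct e N := by
  rw [eulerProduct, eulerLogDeriv, Derivation.map_prod_eq_mul_of_map_eq_mul]
  intro i hi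
  rw [Derivation.map_pow_eq_mul_of_map_eq_mul _
    (eulerOperator_inv_one_sub_X_pow (Nat.one_le_iff_ne_zero.1 (mem_Icc.1 hi).1)), mul_smul]

theorem coeff_eulerLogDeriv {n : ℕ} (hn : n ≠ 0) :
    coeff n (eulerLogDeriv (k := k) e N) = ∑ i ∈ Icc 1 N with i ∣ n, ((e i * i : ℕ) : k) := by
  rw [eulerLogDeriv, map_sum, sum_filter]
  refine sum_congr rfl fun i hi => ?_
  rw [map_nsmul, map_sub, coeff_inv_one_sub_X_pow (Nat.one_le_iff_ne_zero.1 (mem_Icc.1 hi).1),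
    coeff_one, if_neg hn]
  split_ifs <;> simp

theorem coeff_zero_eulerLogDeriv : coeff 0 (eulerLogDeriv (k := k) e N) = 0 := by
  rw [eulerLogDeriv, map_sum]
  refine sum_eq_zero fun i hi => ?_
  rw [map_nsmul, map_sub, coeff_inv_one_sub_X_pow (Nat.one_le_iff_ne_zero.1 (mem_Icc.1 hi).1),
    coeff_one, if_pos (dvd_zero i), if_pos rfl, sub_self, smul_zero]

section Ordered

variable [LinearOrder k] [IsStrictOrderedRing k]

theorem inv_one_sub_X_pow_mem_nonnegCoeffs (i : ℕ) : (1 - X ^ i : k⟦X⟧)⁻¹ ∈ nonnegCoeffs := by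
  rcases eq_or_ne i 0 with rfl | hi
  · simp
  · intro n
    rw [coeff_inv_one_sub_X_pow hi]
    split_ifs <;> simp

theorem eulerProduct_mem_nonnegCoeffs : eulerProduct (k := k) e N ∈ nonnegCoeffs :=
  prod_mem fun i _ => pow_mem (inv_one_sub_X_pow_mem_nonnegCoeffs i) _

theorem natCast_le_coeff_inv_one_sub_X_pow_pow {i : ℕ} (hi : i ≠ 0) (m : ℕ) :
    (m : k) ≤ coeff i (((1 - X ^ i : k⟦X⟧)⁻¹) ^ m) := by
  induction m with
  | zero => simp [coeff_one, hi]
  | succ m ih =>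
    have hG := inv_one_sub_X_pow_mem_nonnegCoeffs (k := k) i
    rw [pow_succ]
    refine le_trans ?_ (coeff_zero_mul_add_coeff_mul_zero_le (pow_mem hG m) hG hi)
    rw [coeff_zero_inv_one_sub_X_pow_pow hi, coeff_inv_one_sub_X_pow hi, if_pos dvd_rfl,
      coeff_inv_one_sub_X_pow hi, if_pos (dvd_zero i)]
    push_cast
    linarith

theorem natCast_le_coeff_eulerProduct {n : ℕ} (hn : n ≠ 0) :
    (e n : k) ≤ coeff n (eulerProduct (k := k) e n) := by
  obtain ⟨m, rfl⟩ := Nat.exists_eq_succ_of_ne_zero hn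
  have hP := eulerProduct_mem_nonnegCoeffs (k := k) e m
  have hG := pow_mem (inv_one_sub_X_pow_mem_nonnegCoeffs (k := k) (m + 1)) (e (m + 1))
  rw [eulerProduct, prod_Icc_succ_top (Nat.le_add_left 1 m)]
  refine le_trans ?_ (coeff_zero_mul_add_coeff_mul_zero_le hP hG hn)
  rw [coeff_zero_eulerProduct, one_mul]
  exact le_add_of_le_of_nonneg (natCast_le_coeff_inv_one_sub_X_pow_pow hn _)
    (mul_nonneg (hP _) (hG _))

variable {e} {a q : k}

theorem coeff_eulerLogDeriv_le (ha : 0 ≤ a) (hq : 2 ≤ q)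
    (he : ∀ i : ℕ, 1 ≤ i → (i : k) * e i ≤ a * q ^ i) {n : ℕ} (hn : n ≠ 0) :
    coeff n (eulerLogDeriv (k := k) e N) ≤ 2 * a * q ^ n := calc
  coeff n (eulerLogDeriv (k := k) e N) ≤ ∑ i ∈ Icc 1 N with i ∣ n, a * q ^ i := by
    rw [coeff_eulerLogDeriv e N hn]
    refine sum_le_sum fun i hi => ?_
    rw [Nat.cast_mul, mul_comm]
    exact he i (mem_Icc.1 (mem_filter.1 hi).1).1
  _ ≤ ∑ i ∈ n.divisors, a * q ^ i := by
    refine sum_le_sum_of_subset_of_nonneg (fun i hi => ?_) fun i _ _ => by positivity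
    exact Nat.mem_divisors.2 ⟨(mem_filter.1 hi).2, hn⟩
  _ ≤ 2 * a * q ^ n := by
    rw [← mul_sum, mul_comm 2 a, mul_assoc]
    exact mul_le_mul_of_nonneg_left (sum_divisors_pow_le hq hn) ha

theorem natCast_mul_coeff_eulerProduct_le (ha : 0 ≤ a) (hq : 2 ≤ q)
    (he : ∀ i : ℕ, 1 ≤ i → (i : k) * e i ≤ a * q ^ i) (n : ℕ) :
    (n : k) * coeff n (eulerProduct e N) ≤
      ∑ j ∈ range n, 2 * a * q ^ (n - j) * coeff j (eulerProduct e N) := calc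
  (n : k) * coeff n (eulerProduct e N)
      = ∑ j ∈ range n, coeff (n - j) (eulerLogDeriv e N) * coeff j (eulerProduct (k := k) e N) := by
    rw [← coeff_eulerOperator, eulerOperator_eulerProduct, coeff_mul, ← Nat.sum_antidiagonal_swap]
    simp only [Prod.fst_swap, Prod.snd_swap]
    rw [Nat.sum_antidiagonal_eq_sum_range_succ (fun j i => coeff i (eulerLogDeriv e N) * coeff j _),
      sum_range_succ, Nat.sub_self, coeff_zero_eulerLogDeriv, zero_mul, add_zero]
  _ ≤ _ := sum_le_sum fun j hj => mul_le_mul_of_nonneg_right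
    (coeff_eulerLogDeriv_le N ha hq he (Nat.sub_ne_zero_of_lt (mem_range.1 hj)))
    (eulerProduct_mem_nonnegCoeffs e N j)

end Ordered

end Field
end PowerSeries

namespace Real

theorem add_one_mul_rpow_le_add_one_rpow_sub_rpow {A t : ℝ} (hA : 0 ≤ A) (ht : 0 < t) :
    (A + 1) * t ^ A ≤ (t + 1) ^ (A + 1) - t ^ (A + 1) := by
  have hB : 1 + (A + 1) * t⁻¹ ≤ (1 + t⁻¹) ^ (A + 1) :=
    one_add_mul_self_le_rpow_one_add (by linarith [inv_nonneg.2 ht.le]) (by linarith)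
  have hsplit : (t + 1) ^ (A + 1) = t ^ (A + 1) * (1 + t⁻¹) ^ (A + 1) := by
    rw [← mul_rpow ht.le (by positivity), mul_add, mul_one, mul_inv_cancel₀ ht.ne']
  have hpow : t ^ (A + 1) = t ^ A * t := rpow_add_one ht.ne' A
  have h := mul_le_mul_of_nonneg_left hB (rpow_nonneg ht.le (A + 1))
  rw [hsplit]
  rw [hpow] at h ⊢
  have hcancel : t ^ A * t * ((A + 1) * t⁻¹) = (A + 1) * t ^ A := by field_simp
  linarith [mul_add (t ^ A * t) 1 ((A + 1) * t⁻¹)]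

theorem add_one_mul_sum_range_rpow_le {A : ℝ} (hA : 0 ≤ A) (n : ℕ) :
    (A + 1) * ∑ j ∈ Finset.range n, ((j : ℝ) + 1) ^ A ≤ ((n : ℝ) + 1) ^ (A + 1) := by
  induction n with
  | zero => simp
  | succ n ih =>
    rw [Finset.sum_range_succ, mul_add, Nat.cast_succ]
    linarith [add_one_mul_rpow_le_add_one_rpow_sub_rpow hA (by positivity : (0 : ℝ) < n + 1)]

theorem rpow_min_logb_sub_one_le_div {a x : ℝ} (ha : 0 < a) (hx : 1 ≤ x) :
    (x + 1) ^ (min (logb 2 a) 0 - 1) ≤ a / x := by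
  rw [rpow_sub_one (by positivity)]
  refine div_le_div₀ ha.le ?_ (by positivity) (by linarith)
  calc (x + 1) ^ min (logb 2 a) 0 ≤ 2 ^ min (logb 2 a) 0 :=
        rpow_le_rpow_of_nonpos two_pos (by linarith) (min_le_right _ _)
    _ ≤ 2 ^ logb 2 a := rpow_le_rpow_of_exponent_le one_le_two (min_le_left _ _)
    _ = a := rpow_logb two_pos (by norm_num) ha

end Real

open Real in
theorem le_add_one_rpow_mul_pow_of_natCast_mul_le {c q : ℝ} (hc : 0 ≤ c) (hq : 0 ≤ q)
    {d : ℕ → ℝ} (h0 : d 0 ≤ 1)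
    (hrec : ∀ n : ℕ, (n : ℝ) * d n ≤ ∑ j ∈ range n, c * q ^ (n - j) * d j) (n : ℕ) :
    d n ≤ ((n : ℝ) + 1) ^ (2 * c) * q ^ n := by
  induction n using Nat.strong_induction_on with
  | _ n ih =>
  rcases n.eq_zero_or_pos with rfl | hn
  · simpa using h0
  -- `A = 2c` is what makes `c (n + 1) ≤ (A + 1) n` hold for every `n ≥ 1`.
  set A := 2 * c
  have hn' : (1 : ℝ) ≤ n := by exact_mod_cast hn
  have key : (A + 1) * ((n : ℝ) * d n) ≤ (A + 1) * ((n : ℝ) * (((n : ℝ) + 1) ^ A * q ^ n)) := calc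
    (A + 1) * ((n : ℝ) * d n)
        ≤ (A + 1) * ∑ j ∈ range n, c * q ^ (n - j) * (((j : ℝ) + 1) ^ A * q ^ j) := by
      gcongr
      refine (hrec n).trans (sum_le_sum fun j hj => ?_)
      gcongr
      exact ih j (mem_range.1 hj)
    _ = c * q ^ n * ((A + 1) * ∑ j ∈ range n, ((j : ℝ) + 1) ^ A) := by
      rw [mul_sum, mul_sum, mul_sum]
      refine sum_congr rfl fun j hj => ?_
      rw [← pow_sub_mul_pow q (mem_range.1 hj).le]
      ring
    _ ≤ c * q ^ n * ((n : ℝ) + 1) ^ (A + 1) := by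
      gcongr
      exact add_one_mul_sum_range_rpow_le (by positivity) n
    _ = (c * ((n : ℝ) + 1)) * (((n : ℝ) + 1) ^ A * q ^ n) := by
      rw [rpow_add_one (by positivity)]
      ring
    _ ≤ ((A + 1) * n) * (((n : ℝ) + 1) ^ A * q ^ n) :=
      mul_le_mul_of_nonneg_right (by nlinarith) (by positivity)
    _ = _ := by ring
  exact le_of_mul_le_mul_left (le_of_mul_le_mul_left key (by positivity)) (by positivity)

-- Factors with `i > n` do not change the `X ^ n`-coefficient, so `d_n` is read off the
-- product truncated at `n`.
/-- Let `0 < a1 ≤ a2`, `q ≥ 2`, and let `(e_n)` be nonnegative integers with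
`a1 q^n / n ≤ e_n ≤ a2 q^n / n` for all `n ≥ 1`.  Define `d_n` by
`∑ d_n x^n = ∏_{n≥1} (1 - x^n)^{-e_n}` (coefficientwise, `d_n` is the `x^n`-coefficient
of the truncated product `∏_{i=1}^n (1 - x^i)^{-e_i}`).  Then there are constants `A1`
depending only on `a1` and `A2` depending only on `a2` such that
`(n+1)^{A1} q^n ≤ d_n ≤ (n+1)^{A2} q^n` for all `n ≥ 0`. -/
theorem euler_product_coefficient_bounds :
    ∃ A1 A2 : ℝ → ℝ,
      ∀ (a1 a2 q : ℝ), 0 < a1 → a1 ≤ a2 → 2 ≤ q →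
      ∀ e : ℕ → ℕ,
        (∀ n : ℕ, 1 ≤ n → a1 * q ^ n / n ≤ (e n : ℝ) ∧ (e n : ℝ) ≤ a2 * q ^ n / n) →
        ∀ n : ℕ,
          ((n : ℝ) + 1) ^ (A1 a1) * q ^ n ≤
              PowerSeries.coeff (R := ℝ) n
                (∏ i ∈ Finset.Icc 1 n, ((1 - PowerSeries.X ^ i)⁻¹) ^ e i) ∧
            PowerSeries.coeff (R := ℝ) n
                (∏ i ∈ Finset.Icc 1 n, ((1 - PowerSeries.X ^ i)⁻¹) ^ e i) ≤
              ((n : ℝ) + 1) ^ (A2 a2) * q ^ n := by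
  refine ⟨fun a => min (Real.logb 2 a) 0 - 1, fun a => 2 * (2 * a), ?_⟩
  intro a1 a2 q ha1 h12 hq e he n
  change _ ≤ coeff n (eulerProduct e n) ∧ coeff n (eulerProduct e n) ≤ _
  have he' (i : ℕ) (hi : 1 ≤ i) : (i : ℝ) * e i ≤ a2 * q ^ i :=
    (le_div_iff₀' (by exact_mod_cast hi)).1 (he i hi).2
  refine ⟨?_, le_add_one_rpow_mul_pow_of_natCast_mul_le (by linarith) (by linarith)
    (coeff_zero_eulerProduct e n).le (natCast_mul_coeff_eulerProduct_le n (by linarith) hq he') n⟩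
  rcases Nat.eq_zero_or_pos n with rfl | hn
  · simp [coeff_zero_eulerProduct]
  calc ((n : ℝ) + 1) ^ (min (Real.logb 2 a1) 0 - 1) * q ^ n ≤ a1 / n * q ^ n := by
        gcongr
        exact Real.rpow_min_logb_sub_one_le_div ha1 (by exact_mod_cast hn)
    _ = a1 * q ^ n / n := div_mul_eq_mul_div ..
    _ ≤ e n := (he n hn).1
    _ ≤ coeff n (eulerProduct e n) := natCast_le_coeff_eulerProduct e hn.ne'
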